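/- Let μ be a σ-finite measure on 𝒳, let 𝒬 be a convex set of probability densities with respect to μ, let x₁,…,xₙ ∈ 𝒳, and let ψ be ψ₁(x) = (x−1)/(x+1) or ψ₂(x) = (x−1)/√(x²+1) (extended by ψ(+∞) = 1, with conventions 0/0 = 1 and a/0 = +∞). If û ∈ 𝒬 maximizes the likelihood u ↦ ∏_{i=1}^n u(x_i) over 𝒬 and ∏_{i=1}^n û(x_i) > 0, then for every t ∈ 𝒬, Σ_{i=1}^n ψ(√(t(x_i)/û(x_i))) ≤ 0; consequently sup_{t∈𝒬} Σ_{i=1}^n ψ(√(t(x_i)/û(x_i))) = 0 = min_{u∈𝒬} sup_{t∈𝒬} Σ_{i=1}^n ψ(√(t(x_i)/u(x_i))), i.e. the maximum-likelihood estimator û is a ρ-estimator on the convex model 𝒬. -/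

import Mathlib

open MeasureTheory

open Classical in
/-- `ψ(√(t(x)/u(x)))` with the conventions `0/0 = 1` (so the value is `ψ(1) = 0`) and
`a/0 = +∞` for `a > 0` (so the value is `ψ(+∞) = 1`, since `ψ₁(+∞) = ψ₂(+∞) = 1`). -/
noncomputable def rhoScore {𝒳 : Type*} (ψ : ℝ → ℝ) (t u : 𝒳 → ℝ) (x : 𝒳) : ℝ :=
  if u x = 0 then (if t x = 0 then 0 else 1) else ψ (Real.sqrt (t x / u x))

/-!
For `ψ = ψ₁` (with `c = 4`) and `ψ = ψ₂` (with `c = 2√2`) one has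
`ψ(x) ≤ (x² - 1)/(x² - 1 + c)` on `[0, ∞)` for some `c > 1`. At `x = √(t/u)` the right-hand side
is `1 - u/m`, where `m = (1 - 1/c) u + (1/c) t` is a mixture of `u` and `t`, hence lies in the
convex model. Since `1 - u/m ≤ log (m/u)`, the score `∑ᵢ ψ(√(t(xᵢ)/û(xᵢ)))` is bounded by the
log-likelihood ratio `log (∏ᵢ m(xᵢ) / ∏ᵢ û(xᵢ))`, which is `≤ 0` because `û` maximizes the
likelihood over the model.
-/

lemma Finset.sum_one_sub_div_nonpos_of_prod_le {ι : Type*} (s : Finset ι) {a b : ι → ℝ}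
    (ha : ∀ i ∈ s, 0 < a i) (hb : ∀ i ∈ s, 0 < b i) (h : ∏ i ∈ s, b i ≤ ∏ i ∈ s, a i) :
    ∑ i ∈ s, (1 - a i / b i) ≤ 0 :=
  calc ∑ i ∈ s, (1 - a i / b i)
      ≤ ∑ i ∈ s, Real.log (b i / a i) := Finset.sum_le_sum fun i hi => by
        simpa using Real.one_sub_inv_le_log_of_pos (div_pos (hb i hi) (ha i hi))
    _ = Real.log ((∏ i ∈ s, b i) / ∏ i ∈ s, a i) := by
        rw [← Finset.prod_div_distrib,
          Real.log_prod fun i hi => (div_pos (hb i hi) (ha i hi)).ne']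
    _ ≤ 0 := by
        have hA : 0 < ∏ i ∈ s, a i := Finset.prod_pos ha
        exact Real.log_nonpos (div_nonneg (Finset.prod_nonneg fun i hi => (hb i hi).le) hA.le)
          ((div_le_one hA).2 h)

lemma psi₁_le {x : ℝ} (hx : 0 ≤ x) : (x - 1) / (x + 1) ≤ (x ^ 2 - 1) / (x ^ 2 - 1 + 4) := by
  rw [div_le_div_iff₀ (by linarith) (by nlinarith)]
  nlinarith [sq_nonneg (x - 1)]

lemma psi₂_le {x : ℝ} (hx : 0 ≤ x) :
    (x - 1) / Real.sqrt (x ^ 2 + 1) ≤ (x ^ 2 - 1) / (x ^ 2 - 1 + 2 * Real.sqrt 2) := by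
  set a := Real.sqrt 2
  set h := Real.sqrt (x ^ 2 + 1)
  have ha2 : a ^ 2 = 2 := Real.sq_sqrt (by norm_num)
  have ha : 1 < a ∧ a < 3 / 2 := ⟨by nlinarith [Real.sqrt_nonneg 2], by nlinarith⟩
  have hh2 : h ^ 2 = x ^ 2 + 1 := Real.sq_sqrt (by positivity)
  have hh : 0 < h := Real.sqrt_pos.2 (by positivity)
  set D := x ^ 2 - 1 + 2 * a
  have hD : 0 < D := by nlinarith
  have hq : 0 ≤ 2 * x ^ 2 + (6 - 4 * a) * x + (8 - 4 * a) := by nlinarith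
  have hfactor : ((x + 1) * h - D) * ((x + 1) * h + D)
      = (x - 1) * (2 * x ^ 2 + (6 - 4 * a) * x + (8 - 4 * a)) := by
    linear_combination (x + 1) ^ 2 * hh2 - 4 * ha2
  have hsign : 0 ≤ (x - 1) * ((x + 1) * h - D) := by
    refine nonneg_of_mul_nonneg_left ?_ (by positivity : 0 < (x + 1) * h + D)
    rw [mul_assoc, hfactor, ← mul_assoc, ← sq]
    positivity
  rw [div_le_div_iff₀ hh hD]
  nlinarith

lemma exists_psi_le_of_psi_eq {ψ : ℝ → ℝ}
    (hψ : (ψ = fun x => (x - 1) / (x + 1)) ∨ (ψ = fun x => (x - 1) / Real.sqrt (x ^ 2 + 1))) :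
    ∃ c : ℝ, 1 < c ∧ ∀ x, 0 ≤ x → ψ x ≤ (x ^ 2 - 1) / (x ^ 2 - 1 + c) := by
  rcases hψ with rfl | rfl
  · exact ⟨4, by norm_num, fun x hx => psi₁_le hx⟩
  · refine ⟨2 * Real.sqrt 2, ?_, fun x hx => psi₂_le hx⟩
    nlinarith [Real.sq_sqrt (show (0 : ℝ) ≤ 2 by norm_num), Real.sqrt_nonneg 2]

section rhoScore

variable {𝒳 : Type*} {ψ : ℝ → ℝ} {c : ℝ}

lemma rhoScore_self (hψ : ψ 1 = 0) (u : 𝒳 → ℝ) (x : 𝒳) : rhoScore ψ u u x = 0 := by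
  by_cases h : u x = 0
  · simp [rhoScore, h]
  · simp [rhoScore, h, hψ]

lemma mixture_apply_pos (hc : 1 < c) {t u : 𝒳 → ℝ} {x : 𝒳} (hu : 0 < u x) (ht : 0 ≤ t x) :
    0 < ((1 - c⁻¹) • u + c⁻¹ • t) x := by
  have : c⁻¹ < 1 := inv_lt_one_of_one_lt₀ hc
  have : 0 < c⁻¹ := by positivity
  simp only [Pi.add_apply, Pi.smul_apply, smul_eq_mul]
  nlinarith

variable (hc : 1 < c) (hψc : ∀ x, 0 ≤ x → ψ x ≤ (x ^ 2 - 1) / (x ^ 2 - 1 + c))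
include hc hψc

lemma rhoScore_le_one (t u : 𝒳 → ℝ) (x : 𝒳) : rhoScore ψ t u x ≤ 1 := by
  unfold rhoScore
  split_ifs
  · exact zero_le_one
  · exact le_rfl
  · refine (hψc _ (Real.sqrt_nonneg _)).trans (div_le_one_of_le₀ (by linarith) ?_)
    nlinarith [sq_nonneg (Real.sqrt (t x / u x))]

lemma rhoScore_le_one_sub_div_mixture {t u : 𝒳 → ℝ} {x : 𝒳} (hu : 0 < u x) (ht : 0 ≤ t x) :
    rhoScore ψ t u x ≤ 1 - u x / ((1 - c⁻¹) • u + c⁻¹ • t) x := by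
  set m := ((1 - c⁻¹) • u + c⁻¹ • t) x
  have hc0 : c ≠ 0 := by positivity
  have hcm : c * m = t x - u x + c * u x := by
    simp only [m, Pi.add_apply, Pi.smul_apply, smul_eq_mul]; field_simp; ring
  have hm : 0 < m := mixture_apply_pos hc hu ht
  have hr : 0 ≤ t x / u x := div_nonneg ht hu.le
  calc rhoScore ψ t u x ≤ (t x / u x - 1) / (t x / u x - 1 + c) := by
        simpa [rhoScore, hu.ne', Real.sq_sqrt hr] using hψc _ (Real.sqrt_nonneg (t x / u x))
    _ = (t x - u x) / (t x - u x + c * u x) := by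
        rw [← mul_div_mul_right _ _ hu.ne']; congr 1 <;> field_simp
    _ = (c * m - c * u x) / (c * m) := by rw [hcm]; ring_nf
    _ = 1 - u x / m := by rw [← mul_sub, mul_div_mul_left _ _ hc0, sub_div, div_self hm.ne']

lemma sum_rhoScore_nonpos_of_prod_mixture_le {ι : Type*} (s : Finset ι) {t u : 𝒳 → ℝ}
    {X : ι → 𝒳} (hu : ∀ i ∈ s, 0 < u (X i)) (ht : ∀ i ∈ s, 0 ≤ t (X i))
    (h : ∏ i ∈ s, ((1 - c⁻¹) • u + c⁻¹ • t) (X i) ≤ ∏ i ∈ s, u (X i)) :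
    ∑ i ∈ s, rhoScore ψ t u (X i) ≤ 0 :=
  (Finset.sum_le_sum fun i hi =>
    rhoScore_le_one_sub_div_mixture hc hψc (hu i hi) (ht i hi)).trans <|
  s.sum_one_sub_div_nonpos_of_prod_le hu (fun i hi => mixture_apply_pos hc (hu i hi) (ht i hi)) h

lemma bddAbove_sum_rhoScore {ι : Type*} (𝒬 : Set (𝒳 → ℝ)) (u : 𝒳 → ℝ) (s : Finset ι)
    (X : ι → 𝒳) : BddAbove {r : ℝ | ∃ t ∈ 𝒬, r = ∑ i ∈ s, rhoScore ψ t u (X i)} := by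
  refine ⟨s.card, ?_⟩
  rintro r ⟨t, -, rfl⟩
  simpa using Finset.sum_le_sum fun i (_ : i ∈ s) => rhoScore_le_one hc hψc t u (X i)

end rhoScore

theorem mle_is_rho_estimator_on_convex_model
    {𝒳 : Type*} [MeasurableSpace 𝒳] (μ : Measure 𝒳)
    (𝒬 : Set (𝒳 → ℝ)) (hconv : Convex ℝ 𝒬)
    (hdens : ∀ q ∈ 𝒬, (∀ x, 0 ≤ q x) ∧ ∫ x, q x ∂μ = 1)
    (ψ : ℝ → ℝ)
    (hψ : (ψ = fun x => (x - 1) / (x + 1)) ∨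
      (ψ = fun x => (x - 1) / Real.sqrt (x ^ 2 + 1)))
    (n : ℕ) (X : Fin n → 𝒳) (uhat : 𝒳 → ℝ) (huQ : uhat ∈ 𝒬)
    (hmax : ∀ t ∈ 𝒬, ∏ i, t (X i) ≤ ∏ i, uhat (X i))
    (hpos : 0 < ∏ i, uhat (X i)) :
    (∀ t ∈ 𝒬, ∑ i, rhoScore ψ t uhat (X i) ≤ 0) ∧
    sSup {r : ℝ | ∃ t ∈ 𝒬, r = ∑ i, rhoScore ψ t uhat (X i)} = 0 ∧
    ∀ u ∈ 𝒬, 0 ≤ sSup {r : ℝ | ∃ t ∈ 𝒬, r = ∑ i, rhoScore ψ t u (X i)} := by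
  obtain ⟨c, hc, hψc⟩ := exists_psi_le_of_psi_eq hψ
  have hψ1 : ψ 1 = 0 := by rcases hψ with rfl | rfl <;> norm_num
  have hupos : ∀ i ∈ Finset.univ, 0 < uhat (X i) := fun i hi =>
    ((hdens uhat huQ).1 (X i)).lt_of_ne (Finset.prod_ne_zero_iff.1 hpos.ne' i hi).symm
  have hnonpos : ∀ t ∈ 𝒬, ∑ i, rhoScore ψ t uhat (X i) ≤ 0 := fun t ht =>
    sum_rhoScore_nonpos_of_prod_mixture_le hc hψc _ hupos (fun i _ => (hdens t ht).1 (X i)) <|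
      hmax _ <| hconv huQ ht (sub_nonneg.2 (inv_le_one_of_one_le₀ hc.le))
        (inv_nonneg.2 (by linarith)) (sub_add_cancel 1 c⁻¹)
  have hdiag : ∀ u ∈ 𝒬, (0 : ℝ) ∈ {r : ℝ | ∃ t ∈ 𝒬, r = ∑ i, rhoScore ψ t u (X i)} :=
    fun u hu => ⟨u, hu, by simp [rhoScore_self hψ1]⟩
  refine ⟨hnonpos, ?_, fun u hu => le_csSup (bddAbove_sum_rhoScore hc hψc 𝒬 u _ X) (hdiag u hu)⟩
  exact IsGreatest.csSup_eq ⟨hdiag uhat huQ, by rintro r ⟨t, ht, rfl⟩; exact hnonpos t ht⟩
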